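/- arXiv:2503.17874 — 5 statements merged into one kernel-verified Lean document; each statement's English description precedes it below -/
import Mathlib

section
/- Let X be a complex Hilbert space and P₀, S₀ densely defined linear operators in X with adjoints P = P₀*, S = S₀* satisfying the coercivity assumption. Then the column operator [P;S] : dom P ∩ dom S → X × X, x ↦ (Px, Sx), is a closed operator, it is injective, and its range {(Px, Sx) : x ∈ dom P ∩ dom S} is a closed subspace of X × X. -/
open scoped ComplexInnerProductSpace

noncomputable section

/-- The adjoint of a linear relation (given as a set of pairs) in an inner product space. -/
def relAdj {Y : Type*} [NormedAddCommGroup Y] [InnerProductSpace ℂ Y]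
    (T : Set (Y × Y)) : Set (Y × Y) :=
  {g | ∀ h ∈ T, ⟪g.2, h.1⟫ = ⟪g.1, h.2⟫}

/-- A linear relation is self-adjoint if it coincides with its adjoint relation. -/
def IsSelfAdjointRel {Y : Type*} [NormedAddCommGroup Y] [InnerProductSpace ℂ Y]
    (T : Set (Y × Y)) : Prop := T = relAdj T

/-- A relation `T` is dissipative if `Re ⟪g, f⟫ ≤ 0` for all `(f, g) ∈ T`. -/
def Dissipative {Y : Type*} [NormedAddCommGroup Y] [InnerProductSpace ℂ Y]
    (T : Set (Y × Y)) : Prop := ∀ p ∈ T, (⟪p.2, p.1⟫).re ≤ 0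

/-- A relation is maximally dissipative if it is dissipative and equals every dissipative
linear relation containing it. -/
def MaxDissipative {Y : Type*} [NormedAddCommGroup Y] [InnerProductSpace ℂ Y]
    (T : Set (Y × Y)) : Prop :=
  Dissipative T ∧
    ∀ K : Submodule ℂ (Y × Y), Dissipative (K : Set (Y × Y)) → T ⊆ (K : Set (Y × Y)) →
      T = (K : Set (Y × Y))

variable {X : Type*} [NormedAddCommGroup X] [InnerProductSpace ℂ X] [CompleteSpace X]

/-- `dom[P;S] = dom P ⊓ dom S`. -/
def colDom (P S : X →ₗ.[ℂ] X) : Submodule ℂ X := P.domain ⊓ S.domain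

/-- Application of `P` on `dom[P;S]`. -/
def Pap (P S : X →ₗ.[ℂ] X) (x : colDom P S) : X := P ⟨x.1, x.2.1⟩

/-- Application of `S` on `dom[P;S]`. -/
def Sap (P S : X →ₗ.[ℂ] X) (x : colDom P S) : X := S ⟨x.1, x.2.2⟩

/-- The coercivity assumption on the column operator `[P;S]`. -/
def Coercive (P S : X →ₗ.[ℂ] X) : Prop :=
  ∃ c : ℝ, 0 < c ∧ ∀ x : colDom P S,
    c ^ 2 * ‖(x : X)‖ ^ 2 ≤ ‖Pap P S x‖ ^ 2 + ‖Sap P S x‖ ^ 2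

/-- The range of the column operator `[P;S]` as a linear relation:
`{(Px, Sx) : x ∈ dom P ⊓ dom S}`. -/
def ranPS (P S : X →ₗ.[ℂ] X) : Set (X × X) :=
  {p | ∃ x : colDom P S, p = (Pap P S x, Sap P S x)}

/-- The relation `H = {(f₁, f₂) ∈ dom S₀ × dom P₀ : S₀ f₁ = P₀ f₂}`. -/
def Hrel (P₀ S₀ : X →ₗ.[ℂ] X) : Set (X × X) :=
  {f | ∃ (h₁ : f.1 ∈ S₀.domain) (h₂ : f.2 ∈ P₀.domain), S₀ ⟨f.1, h₁⟩ = P₀ ⟨f.2, h₂⟩}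

/-- Boundary triplet for `ran [P;S]`: `Γ = (Γ₀, Γ₁)` is surjective onto `G × G` and
the abstract Green identity holds. -/
structure IsBoundaryTriplet (P S : X →ₗ.[ℂ] X)
    (G : Type*) [NormedAddCommGroup G] [InnerProductSpace ℂ G]
    (Γ₀ Γ₁ : colDom P S →ₗ[ℂ] G) : Prop where
  surj : Function.Surjective fun x : colDom P S => (Γ₀ x, Γ₁ x)
  green : ∀ x y : colDom P S,
    ⟪Sap P S x, Pap P S y⟫ - ⟪Pap P S x, Sap P S y⟫ = ⟪Γ₁ x, Γ₀ y⟫ - ⟪Γ₀ x, Γ₁ y⟫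

/-- `ran A_Θ = {(Px, Sx) : x ∈ dom[P;S], (Γ₀ x, Γ₁ x) ∈ Θ}`. -/
def ranA (P S : X →ₗ.[ℂ] X) {G : Type*} [NormedAddCommGroup G] [InnerProductSpace ℂ G]
    (Γ₀ Γ₁ : colDom P S →ₗ[ℂ] G) (Θ : Set (G × G)) : Set (X × X) :=
  {p | ∃ x : colDom P S, (Γ₀ x, Γ₁ x) ∈ Θ ∧ p = (Pap P S x, Sap P S x)}

/-- The graph inner product `⟪Px, Py⟫ + ⟪Sx, Sy⟫` on `dom[P;S]`. -/
def gip (P S : X →ₗ.[ℂ] X) (x y : colDom P S) : ℂ :=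
  ⟪Pap P S x, Pap P S y⟫ + ⟪Sap P S x, Sap P S y⟫

/-- The squared graph norm `‖Px‖² + ‖Sx‖²` on `dom[P;S]`. -/
def gnormSq (P S : X →ₗ.[ℂ] X) (x : colDom P S) : ℝ :=
  ‖Pap P S x‖ ^ 2 + ‖Sap P S x‖ ^ 2

/-- Characterization of the graph of the adjoint. -/
lemma adj_char (T : X →ₗ.[ℂ] X) (hT : Dense (T.domain : Set X)) (x u : X) :
    (∃ hx : x ∈ T.adjoint.domain, T.adjoint ⟨x, hx⟩ = u) ↔
      ∀ a : T.domain, ⟪u, (a : X)⟫ = ⟪x, T a⟫ := by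
  constructor
  · rintro ⟨hx, rfl⟩ a
    exact LinearPMap.adjoint_isFormalAdjoint hT ⟨x, hx⟩ a
  · intro h
    have hx : x ∈ T.adjoint.domain :=
      LinearPMap.mem_adjoint_domain_of_exists x ⟨u, fun a => h a⟩
    exact ⟨hx, LinearPMap.adjoint_apply_eq hT ⟨x, hx⟩ (fun a => h a)⟩

lemma Pap_sub (P S : X →ₗ.[ℂ] X) (x y : colDom P S) :
    Pap P S (x - y) = Pap P S x - Pap P S y := by
  have h : (⟨((x - y : colDom P S) : X), (x - y).2.1⟩ : P.domain)
      = ⟨(x : X), x.2.1⟩ - ⟨(y : X), y.2.1⟩ := by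
    apply Subtype.ext; rfl
  simp only [Pap, h, LinearPMap.map_sub]

lemma Sap_sub (P S : X →ₗ.[ℂ] X) (x y : colDom P S) :
    Sap P S (x - y) = Sap P S x - Sap P S y := by
  have h : (⟨((x - y : colDom P S) : X), (x - y).2.2⟩ : S.domain)
      = ⟨(x : X), x.2.2⟩ - ⟨(y : X), y.2.2⟩ := by
    apply Subtype.ext; rfl
  simp only [Sap, h, LinearPMap.map_sub]

/-- Under coercivity, the column operator `[P;S]` is closed (its graph is closed),
injective, and its range is a closed subspace of `X × X`. -/
theorem colOp_closed_injective_closedRange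
    (P₀ S₀ P S : X →ₗ.[ℂ] X)
    (hP₀ : Dense (P₀.domain : Set X)) (hS₀ : Dense (S₀.domain : Set X))
    (hP : P = P₀.adjoint) (hS : S = S₀.adjoint)
    (hcoer : Coercive P S) :
    IsClosed {p : X × (X × X) | ∃ x : colDom P S, p = ((x : X), (Pap P S x, Sap P S x))} ∧
    Function.Injective (fun x : colDom P S => (Pap P S x, Sap P S x)) ∧
    IsClosed (ranPS P S) := by
  obtain ⟨c, hc, hco⟩ := hcoer
  -- the graph of the column operator
  set Gr : Set (X × (X × X)) :=
    {p : X × (X × X) | ∃ x : colDom P S, p = ((x : X), (Pap P S x, Sap P S x))} with hGr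
  -- characterization of the graph via inner products
  have hchar : Gr = {p : X × (X × X) |
      (∀ a : P₀.domain, ⟪p.2.1, (a : X)⟫ = ⟪p.1, P₀ a⟫) ∧
      (∀ b : S₀.domain, ⟪p.2.2, (b : X)⟫ = ⟪p.1, S₀ b⟫)} := by
    ext p
    constructor
    · rintro ⟨x, rfl⟩
      subst hP; subst hS
      constructor
      · exact (adj_char P₀ hP₀ (x : X) (Pap _ _ x)).1 ⟨x.2.1, rfl⟩
      · exact (adj_char S₀ hS₀ (x : X) (Sap _ _ x)).1 ⟨x.2.2, rfl⟩
    · rintro ⟨h1, h2⟩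
      subst hP; subst hS
      obtain ⟨hx1, he1⟩ := (adj_char P₀ hP₀ p.1 p.2.1).2 h1
      obtain ⟨hx2, he2⟩ := (adj_char S₀ hS₀ p.1 p.2.2).2 h2
      refine ⟨⟨p.1, hx1, hx2⟩, ?_⟩
      simp only [Pap, Sap, he1, he2]
  -- graph is closed
  have hGrClosed : IsClosed Gr := by
    rw [hchar]
    have : {p : X × (X × X) |
        (∀ a : P₀.domain, ⟪p.2.1, (a : X)⟫ = ⟪p.1, P₀ a⟫) ∧
        (∀ b : S₀.domain, ⟪p.2.2, (b : X)⟫ = ⟪p.1, S₀ b⟫)} =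
        (⋂ a : P₀.domain, {p : X × (X × X) | ⟪p.2.1, (a : X)⟫ = ⟪p.1, P₀ a⟫}) ∩
        (⋂ b : S₀.domain, {p : X × (X × X) | ⟪p.2.2, (b : X)⟫ = ⟪p.1, S₀ b⟫}) := by
      ext p; simp [Set.mem_iInter, Set.mem_setOf_eq]
    rw [this]
    apply IsClosed.inter
    · apply isClosed_iInter
      intro a
      exact isClosed_eq (Continuous.inner (continuous_snd.fst) continuous_const)
        (Continuous.inner continuous_fst continuous_const)
    · apply isClosed_iInter
      intro b
      exact isClosed_eq (Continuous.inner (continuous_snd.snd) continuous_const)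
        (Continuous.inner continuous_fst continuous_const)
  -- injectivity
  have hinj : Function.Injective (fun x : colDom P S => (Pap P S x, Sap P S x)) := by
    intro x y hxy
    have h1 : Pap P S x = Pap P S y := congrArg Prod.fst hxy
    have h2 : Sap P S x = Sap P S y := congrArg Prod.snd hxy
    have hP' : Pap P S (x - y) = 0 := by rw [Pap_sub, h1, sub_self]
    have hS' : Sap P S (x - y) = 0 := by rw [Sap_sub, h2, sub_self]
    have := hco (x - y)
    rw [hP', hS'] at this
    simp only [norm_zero] at this
    have h0 : ‖((x - y : colDom P S) : X)‖ ^ 2 ≤ 0 := by nlinarith [pow_pos hc 2]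
    have h0' : ‖((x - y : colDom P S) : X)‖ ^ 2 = 0 :=
      le_antisymm h0 (sq_nonneg _)
    have hxy0 : ‖((x - y : colDom P S) : X)‖ = 0 :=
      pow_eq_zero_iff two_ne_zero |>.mp h0'
    have : ((x - y : colDom P S) : X) = 0 := norm_eq_zero.mp hxy0
    have : (x : X) - (y : X) = 0 := this
    exact Subtype.ext (by exact sub_eq_zero.mp this)
  refine ⟨hGrClosed, hinj, ?_⟩
  -- closed range
  apply IsSeqClosed.isClosed
  intro f p hf hfp
  choose x hx using hf
  -- the sequence x n is Cauchy
  have hkey : ∀ n m : ℕ, c ^ 2 * ‖(x n : X) - (x m : X)‖ ^ 2 ≤ 2 * dist (f n) (f m) ^ 2 := by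
    intro n m
    have := hco (x n - x m)
    rw [Pap_sub, Sap_sub] at this
    have hfn : f n = (Pap P S (x n), Sap P S (x n)) := hx n
    have hfm : f m = (Pap P S (x m), Sap P S (x m)) := hx m
    have hd1 : ‖Pap P S (x n) - Pap P S (x m)‖ ≤ dist (f n) (f m) := by
      rw [hfn, hfm]
      simp only [Prod.dist_eq, dist_eq_norm]
      exact le_max_left _ _
    have hd2 : ‖Sap P S (x n) - Sap P S (x m)‖ ≤ dist (f n) (f m) := by
      rw [hfn, hfm]
      simp only [Prod.dist_eq, dist_eq_norm]
      exact le_max_right _ _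
    have hsub : ((x n - x m : colDom P S) : X) = (x n : X) - (x m : X) := rfl
    rw [hsub] at this
    nlinarith [norm_nonneg (Pap P S (x n) - Pap P S (x m)),
      norm_nonneg (Sap P S (x n) - Sap P S (x m)), dist_nonneg (x := f n) (y := f m)]
  have hcauchy : CauchySeq (fun n => (x n : X)) := by
    rw [Metric.cauchySeq_iff]
    intro ε hε
    have hfc : CauchySeq f := hfp.cauchySeq
    rw [Metric.cauchySeq_iff] at hfc
    obtain ⟨N, hN⟩ := hfc (c * ε / 2) (by positivity)
    refine ⟨N, fun n hn m hm => ?_⟩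
    have h1 := hkey n m
    have h2 := hN n hn m hm
    have hd : dist ((x n : X)) ((x m : X)) = ‖(x n : X) - (x m : X)‖ := dist_eq_norm _ _
    rw [hd]
    have h3 : dist (f n) (f m) ^ 2 < (c * ε / 2) ^ 2 := by
      nlinarith [dist_nonneg (x := f n) (y := f m)]
    have h4 : ‖(x n : X) - (x m : X)‖ ^ 2 < ε ^ 2 := by
      nlinarith [pow_pos hc 2]
    nlinarith [norm_nonneg ((x n : X) - (x m : X)), hε]
  obtain ⟨z, hz⟩ := cauchySeq_tendsto_of_complete hcauchy
  -- (z, p) is in the closed graph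
  have hmem : ∀ n, ((x n : X), f n) ∈ Gr := by
    intro n
    exact ⟨x n, by rw [← hx n]⟩
  have hlim : Filter.Tendsto (fun n => ((x n : X), f n)) Filter.atTop (nhds (z, p)) :=
    hz.prodMk_nhds hfp
  have hzp : (z, p) ∈ Gr := hGrClosed.mem_of_tendsto hlim (Filter.Eventually.of_forall hmem)
  obtain ⟨w, hw⟩ := hzp
  exact ⟨w, congrArg Prod.snd hw⟩
end
end

section
/- Let X be a complex Hilbert space, P₀, S₀ densely defined linear operators in X with adjoints P = P₀*, S = S₀* satisfying the coercivity assumption, suppose the relation H is symmetric, and let (G, Γ₀, Γ₁) be a boundary triplet for ran[P;S]. Then the map Γ = (Γ₀, Γ₁) : dom[P;S] → G × G is continuous when dom[P;S] carries the norm ‖x‖ = (‖Px‖² + ‖Sx‖²)^{1/2}. -/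
open scoped ComplexInnerProductSpace

noncomputable section

variable {X : Type*} [NormedAddCommGroup X] [InnerProductSpace ℂ X] [CompleteSpace X]

section AuxCol

variable {X : Type*} [NormedAddCommGroup X] [InnerProductSpace ℂ X] [CompleteSpace X]

/-- The column operator `[P;S]` as a linear map into `X × X`. -/
def colL (P S : X →ₗ.[ℂ] X) : colDom P S →ₗ[ℂ] X × X where
  toFun x := (Pap P S x, Sap P S x)
  map_add' x y :=
    Prod.ext (P.map_add ⟨(x : X), x.2.1⟩ ⟨(y : X), y.2.1⟩)
      (S.map_add ⟨(x : X), x.2.2⟩ ⟨(y : X), y.2.2⟩)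
  map_smul' c x :=
    Prod.ext (P.map_smul c ⟨(x : X), x.2.1⟩) (S.map_smul c ⟨(x : X), x.2.2⟩)

@[simp] lemma colL_fst (P S : X →ₗ.[ℂ] X) (z : colDom P S) :
    (colL P S z).1 = Pap P S z := rfl

@[simp] lemma colL_snd (P S : X →ₗ.[ℂ] X) (z : colDom P S) :
    (colL P S z).2 = Sap P S z := rfl

end AuxCol

set_option maxHeartbeats 2000000 in
/-- The boundary map `Γ = (Γ₀, Γ₁)` is continuous (bounded) from `dom[P;S]`
with the graph norm to `G × G`. -/
theorem boundaryMap_continuous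
    {G : Type*} [NormedAddCommGroup G] [InnerProductSpace ℂ G] [CompleteSpace G]
    (P₀ S₀ P S : X →ₗ.[ℂ] X)
    (hP₀ : Dense (P₀.domain : Set X)) (hS₀ : Dense (S₀.domain : Set X))
    (hP : P = P₀.adjoint) (hS : S = S₀.adjoint)
    (hcoer : Coercive P S)
    (hsym : Hrel P₀ S₀ ⊆ relAdj (Hrel P₀ S₀))
    (Γ₀ Γ₁ : colDom P S →ₗ[ℂ] G)
    (hbt : IsBoundaryTriplet P S G Γ₀ Γ₁) :
    ∃ C : ℝ, 0 ≤ C ∧ ∀ x : colDom P S,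
      ‖Γ₀ x‖ ^ 2 + ‖Γ₁ x‖ ^ 2 ≤ C * gnormSq P S x := by
  subst hP
  subst hS
  obtain ⟨c, hc, hco⟩ := hcoer
  -- injectivity of the column map
  have hLinj : Function.Injective (colL P₀.adjoint S₀.adjoint) := by
    intro x y hxy
    have h0 : colL P₀.adjoint S₀.adjoint (x - y) = 0 := by rw [map_sub, hxy, sub_self]
    have hP0 : Pap P₀.adjoint S₀.adjoint (x - y) = 0 := congrArg Prod.fst h0
    have hS0 : Sap P₀.adjoint S₀.adjoint (x - y) = 0 := congrArg Prod.snd h0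
    have h := hco (x - y)
    rw [hP0, hS0, norm_zero] at h
    norm_num at h
    have hnn : (0:ℝ) ≤ ‖(x : X) - (y : X)‖ ^ 2 := by positivity
    have h'' : c ^ 2 * ‖(x : X) - (y : X)‖ ^ 2 ≤ c ^ 2 * 0 := by
      rw [mul_zero]; linarith
    have hn2 : ‖(x : X) - (y : X)‖ ^ 2 ≤ 0 :=
      le_of_mul_le_mul_left h'' (pow_pos hc 2)
    have hn0 : ‖(x : X) - (y : X)‖ ^ 2 = 0 := le_antisymm hn2 hnn
    have hxy0 : (x : X) - (y : X) = 0 := by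
      have := (pow_eq_zero_iff two_ne_zero).mp hn0
      simpa [norm_eq_zero] using this
    exact Subtype.ext (sub_eq_zero.mp hxy0)
  -- the range of the column map
  set R : Submodule ℂ (X × X) := LinearMap.range (colL P₀.adjoint S₀.adjoint) with hRdef
  -- comparison of norms
  have hnorm_le : ∀ z : colDom P₀.adjoint S₀.adjoint, c * ‖(z : X)‖ ≤ Real.sqrt 2 * ‖colL P₀.adjoint S₀.adjoint z‖ := by
    intro z
    have h := hco z
    have h1 : ‖Pap P₀.adjoint S₀.adjoint z‖ ≤ ‖colL P₀.adjoint S₀.adjoint z‖ := by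
      simpa using norm_fst_le (colL P₀.adjoint S₀.adjoint z)
    have h2 : ‖Sap P₀.adjoint S₀.adjoint z‖ ≤ ‖colL P₀.adjoint S₀.adjoint z‖ := by
      simpa using norm_snd_le (colL P₀.adjoint S₀.adjoint z)
    have hsq : (c * ‖(z : X)‖) ^ 2 ≤ (Real.sqrt 2 * ‖colL P₀.adjoint S₀.adjoint z‖) ^ 2 := by
      rw [mul_pow, mul_pow, Real.sq_sqrt (by norm_num : (0:ℝ) ≤ 2)]
      nlinarith [norm_nonneg (Pap P₀.adjoint S₀.adjoint z), norm_nonneg (Sap P₀.adjoint S₀.adjoint z),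
        norm_nonneg (colL P₀.adjoint S₀.adjoint z)]
    exact le_of_pow_le_pow_left₀ two_ne_zero (by positivity) hsq
  -- the range is closed
  have hRclosed : IsClosed (R : Set (X × X)) := by
    apply IsSeqClosed.isClosed
    intro f p hfR hfp
    choose x hx using fun n => LinearMap.mem_range.mp (hfR n)
    have hfC : CauchySeq f := hfp.cauchySeq
    have huC : CauchySeq fun n => ((x n : X)) := by
      rw [Metric.cauchySeq_iff] at hfC ⊢
      intro ε hε
      have hs2 : (0:ℝ) < Real.sqrt 2 := by positivity
      obtain ⟨N, hN⟩ := hfC (c * ε / Real.sqrt 2) (by positivity)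
      refine ⟨N, fun m hm n hn => ?_⟩
      have h := hnorm_le (x m - x n)
      rw [map_sub, hx, hx] at h
      have hd := hN m hm n hn
      rw [dist_eq_norm] at hd ⊢
      have hcoe : ((x m - x n : colDom P₀.adjoint S₀.adjoint) : X) = (x m : X) - (x n : X) := rfl
      rw [hcoe] at h
      have heq : Real.sqrt 2 * (c * ε / Real.sqrt 2) = c * ε := by
        field_simp
      have h3 : Real.sqrt 2 * ‖f m - f n‖ < c * ε := by
        calc Real.sqrt 2 * ‖f m - f n‖ < Real.sqrt 2 * (c * ε / Real.sqrt 2) :=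
              (mul_lt_mul_of_pos_left hd hs2)
          _ = c * ε := heq
      nlinarith [norm_nonneg ((x m : X) - (x n : X))]
    obtain ⟨xl, hxl⟩ := cauchySeq_tendsto_of_complete huC
    have hp1 : Filter.Tendsto (fun n => (f n).1) Filter.atTop (nhds p.1) :=
      (continuous_fst.tendsto p).comp hfp
    have hp2 : Filter.Tendsto (fun n => (f n).2) Filter.atTop (nhds p.2) :=
      (continuous_snd.tendsto p).comp hfp
    -- inner product identities in the limit
    have hinnerP : ∀ v : P₀.domain, (⟪p.1, (v : X)⟫ : ℂ) = ⟪xl, P₀ v⟫ := by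
      intro v
      have hform := LinearPMap.adjoint_isFormalAdjoint hP₀
      have heqn : ∀ n, (⟪(f n).1, (v : X)⟫ : ℂ) = ⟪((x n : X)), P₀ v⟫ := by
        intro n
        have h1 : (f n).1 = P₀.adjoint ⟨((x n : X)), (x n).2.1⟩ := by
          rw [← hx n]; rfl
        rw [h1]
        exact hform ⟨((x n : X)), (x n).2.1⟩ v
      have hL : Filter.Tendsto (fun n => (⟪(f n).1, (v : X)⟫ : ℂ)) Filter.atTop
          (nhds ⟪p.1, (v : X)⟫) := hp1.inner tendsto_const_nhds
      have hR : Filter.Tendsto (fun n => (⟪((x n : X)), P₀ v⟫ : ℂ)) Filter.atTop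
          (nhds ⟪xl, P₀ v⟫) := hxl.inner tendsto_const_nhds
      exact tendsto_nhds_unique (by simpa only [heqn] using hL) hR
    have hinnerS : ∀ v : S₀.domain, (⟪p.2, (v : X)⟫ : ℂ) = ⟪xl, S₀ v⟫ := by
      intro v
      have hform := LinearPMap.adjoint_isFormalAdjoint hS₀
      have heqn : ∀ n, (⟪(f n).2, (v : X)⟫ : ℂ) = ⟪((x n : X)), S₀ v⟫ := by
        intro n
        have h1 : (f n).2 = S₀.adjoint ⟨((x n : X)), (x n).2.2⟩ := by
          rw [← hx n]; rfl
        rw [h1]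
        exact hform ⟨((x n : X)), (x n).2.2⟩ v
      have hL : Filter.Tendsto (fun n => (⟪(f n).2, (v : X)⟫ : ℂ)) Filter.atTop
          (nhds ⟪p.2, (v : X)⟫) := hp2.inner tendsto_const_nhds
      have hR : Filter.Tendsto (fun n => (⟪((x n : X)), S₀ v⟫ : ℂ)) Filter.atTop
          (nhds ⟪xl, S₀ v⟫) := hxl.inner tendsto_const_nhds
      exact tendsto_nhds_unique (by simpa only [heqn] using hL) hR
    have hmemP : xl ∈ P₀.adjoint.domain :=
      LinearPMap.mem_adjoint_domain_of_exists _ ⟨p.1, fun v => hinnerP v⟩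
    have hmemS : xl ∈ S₀.adjoint.domain :=
      LinearPMap.mem_adjoint_domain_of_exists _ ⟨p.2, fun v => hinnerS v⟩
    have hxlmem : xl ∈ colDom P₀.adjoint S₀.adjoint := ⟨hmemP, hmemS⟩
    have hvalP : P₀.adjoint ⟨xl, hmemP⟩ = p.1 :=
      LinearPMap.adjoint_apply_eq hP₀ ⟨xl, hmemP⟩ fun v => hinnerP v
    have hvalS : S₀.adjoint ⟨xl, hmemS⟩ = p.2 :=
      LinearPMap.adjoint_apply_eq hS₀ ⟨xl, hmemS⟩ fun v => hinnerS v
    refine LinearMap.mem_range.mpr ⟨⟨xl, hxlmem⟩, ?_⟩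
    show (Pap P₀.adjoint S₀.adjoint ⟨xl, hxlmem⟩, Sap P₀.adjoint S₀.adjoint ⟨xl, hxlmem⟩) = p
    have e1 : Pap P₀.adjoint S₀.adjoint ⟨xl, hxlmem⟩ = p.1 := hvalP
    have e2 : Sap P₀.adjoint S₀.adjoint ⟨xl, hxlmem⟩ = p.2 := hvalS
    rw [e1, e2]
  haveI : CompleteSpace R := hRclosed.completeSpace_coe
  set e : colDom P₀.adjoint S₀.adjoint ≃ₗ[ℂ] R := LinearEquiv.ofInjective (colL P₀.adjoint S₀.adjoint) hLinj with hedef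
  set Γp : colDom P₀.adjoint S₀.adjoint →ₗ[ℂ] G × G := Γ₀.prod Γ₁ with hΓpdef
  set Φ : R →ₗ[ℂ] G × G := Γp ∘ₗ (e.symm : R →ₗ[ℂ] colDom P₀.adjoint S₀.adjoint) with hΦdef
  have hecoe : ∀ z : colDom P₀.adjoint S₀.adjoint, ((e z : R) : X × X) = colL P₀.adjoint S₀.adjoint z := by
    intro z; rw [hedef]; exact LinearEquiv.ofInjective_apply _ _
  have hΦapp : ∀ r : R, Φ r = Γp (e.symm r) := fun r => rfl
  have hΦe : ∀ z : colDom P₀.adjoint S₀.adjoint, Φ (e z) = (Γ₀ z, Γ₁ z) := by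
    intro z; rw [hΦapp, LinearEquiv.symm_apply_apply]; rfl
  -- the graph of Φ is closed
  have hgraph : IsClosed (Φ.graph : Set (R × (G × G))) := by
    have hset : (Φ.graph : Set (R × (G × G))) =
        ⋂ y : colDom P₀.adjoint S₀.adjoint, {q : R × (G × G) |
          (⟪((q.1 : X × X)).2, Pap P₀.adjoint S₀.adjoint y⟫ - ⟪((q.1 : X × X)).1, Sap P₀.adjoint S₀.adjoint y⟫ : ℂ)
            = ⟪q.2.2, Γ₀ y⟫ - ⟪q.2.1, Γ₁ y⟫} := by
      ext q
      simp only [Set.mem_iInter, Set.mem_setOf_eq, SetLike.mem_coe,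
        LinearMap.mem_graph_iff]
      constructor
      · intro hq y
        set z := e.symm q.1 with hz
        have hcoe : ((q.1 : X × X)) = colL P₀.adjoint S₀.adjoint z := by
          rw [hz, ← hecoe (e.symm q.1), LinearEquiv.apply_symm_apply]
        have hq2 : q.2 = (Γ₀ z, Γ₁ z) := by
          rw [hq, hΦapp]; rfl
        rw [hcoe, hq2, colL_fst, colL_snd]
        exact hbt.green z y
      · intro hq
        set z := e.symm q.1 with hz
        have hcoe : ((q.1 : X × X)) = colL P₀.adjoint S₀.adjoint z := by
          rw [hz, ← hecoe (e.symm q.1), LinearEquiv.apply_symm_apply]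
        have key : ∀ y : colDom P₀.adjoint S₀.adjoint,
            (⟪Γ₁ z, Γ₀ y⟫ - ⟪Γ₀ z, Γ₁ y⟫ : ℂ) = ⟪q.2.2, Γ₀ y⟫ - ⟪q.2.1, Γ₁ y⟫ := by
          intro y
          have h1 := hq y
          rw [hcoe, colL_fst, colL_snd] at h1
          rw [← h1]
          exact (hbt.green z y).symm
        have h1 : Γ₁ z = q.2.2 := by
          obtain ⟨y, hy⟩ := hbt.surj (Γ₁ z - q.2.2, 0)
          have hy0 : Γ₀ y = Γ₁ z - q.2.2 := congrArg Prod.fst hy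
          have hy1 : Γ₁ y = 0 := congrArg Prod.snd hy
          have := key y
          rw [hy0, hy1, inner_zero_right, inner_zero_right, sub_zero, sub_zero] at this
          have : (⟪Γ₁ z - q.2.2, Γ₁ z - q.2.2⟫ : ℂ) = 0 := by
            rw [inner_sub_left, this, sub_self]
          exact sub_eq_zero.mp (inner_self_eq_zero.mp this)
        have h0 : Γ₀ z = q.2.1 := by
          obtain ⟨y, hy⟩ := hbt.surj (0, Γ₀ z - q.2.1)
          have hy0 : Γ₀ y = 0 := congrArg Prod.fst hy
          have hy1 : Γ₁ y = Γ₀ z - q.2.1 := congrArg Prod.snd hy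
          have := key y
          rw [hy0, hy1, inner_zero_right, inner_zero_right, zero_sub, zero_sub,
            neg_inj] at this
          have : (⟪Γ₀ z - q.2.1, Γ₀ z - q.2.1⟫ : ℂ) = 0 := by
            rw [inner_sub_left, this, sub_self]
          exact sub_eq_zero.mp (inner_self_eq_zero.mp this)
        have hΦq : Φ q.1 = (Γ₀ z, Γ₁ z) := by rw [hΦapp]; rfl
        rw [hΦq, h0, h1]
    rw [hset]
    apply isClosed_iInter
    intro y
    apply isClosed_eq
    · exact Continuous.sub
        (Continuous.inner ((continuous_subtype_val.comp continuous_fst).snd)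
          continuous_const)
        (Continuous.inner ((continuous_subtype_val.comp continuous_fst).fst)
          continuous_const)
    · exact Continuous.sub
        (Continuous.inner (continuous_snd.snd) continuous_const)
        (Continuous.inner (continuous_snd.fst) continuous_const)
  have hΦcont : Continuous Φ := Φ.continuous_of_isClosed_graph hgraph
  let ΦL : R →L[ℂ] G × G := ⟨Φ, hΦcont⟩
  refine ⟨2 * ‖ΦL‖ ^ 2, by positivity, fun x => ?_⟩
  set r : R := e x with hrdef
  have h1 : ΦL r = (Γ₀ x, Γ₁ x) := hΦe x
  have h2 : ‖ΦL r‖ ≤ ‖ΦL‖ * ‖r‖ := ΦL.le_opNorm r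
  have h3 : ‖Γ₀ x‖ ≤ ‖ΦL r‖ := by rw [h1]; exact norm_fst_le (Γ₀ x, Γ₁ x)
  have h4 : ‖Γ₁ x‖ ≤ ‖ΦL r‖ := by rw [h1]; exact norm_snd_le (Γ₀ x, Γ₁ x)
  have h5 : ‖r‖ ^ 2 ≤ gnormSq P₀.adjoint S₀.adjoint x := by
    have hre : ‖r‖ = ‖colL P₀.adjoint S₀.adjoint x‖ := by
      show ‖((r : R) : X × X)‖ = _
      rw [hrdef, hecoe]
    rw [hre, Prod.norm_def]
    unfold gnormSq
    simp only [colL_fst, colL_snd]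
    rcases le_total ‖Pap P₀.adjoint S₀.adjoint x‖ ‖Sap P₀.adjoint S₀.adjoint x‖ with h | h
    · rw [sup_eq_right.mpr h]
      nlinarith [sq_nonneg ‖Pap P₀.adjoint S₀.adjoint x‖]
    · rw [sup_eq_left.mpr h]
      nlinarith [sq_nonneg ‖Sap P₀.adjoint S₀.adjoint x‖]
  have ha : ‖Γ₀ x‖ ≤ ‖ΦL‖ * ‖r‖ := h3.trans h2
  have hb : ‖Γ₁ x‖ ≤ ‖ΦL‖ * ‖r‖ := h4.trans h2
  have ha2 : ‖Γ₀ x‖ ^ 2 ≤ (‖ΦL‖ * ‖r‖) ^ 2 := by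
    nlinarith [norm_nonneg (Γ₀ x), norm_nonneg ΦL, norm_nonneg r]
  have hb2 : ‖Γ₁ x‖ ^ 2 ≤ (‖ΦL‖ * ‖r‖) ^ 2 := by
    nlinarith [norm_nonneg (Γ₁ x), norm_nonneg ΦL, norm_nonneg r]
  have hc2 : (‖ΦL‖ * ‖r‖) ^ 2 ≤ ‖ΦL‖ ^ 2 * gnormSq P₀.adjoint S₀.adjoint x := by
    rw [mul_pow]
    exact mul_le_mul_of_nonneg_left h5 (sq_nonneg _)
  nlinarith
end
end

section
/- Let X be a complex Hilbert space, P₀, S₀ densely defined linear operators in X with adjoints P = P₀*, S = S₀* satisfying the coercivity assumption, suppose the relation H is symmetric, and let (G, Γ₀, Γ₁) be a boundary triplet for ran[P;S]. Then for every linear relation K in X with {(Px, Sx) : x ∈ ker Γ₀ ∩ ker Γ₁} ⊆ K ⊆ ran[P;S], there exists a unique linear relation Θ ⊆ G × G such that K = ran A_Θ. -/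
open scoped ComplexInnerProductSpace

noncomputable section

variable {X : Type*} [NormedAddCommGroup X] [InnerProductSpace ℂ X] [CompleteSpace X]

/-- The column operator `[P;S]` as a linear map on `dom[P;S]`. -/
def PSmap (P S : X →ₗ.[ℂ] X) : colDom P S →ₗ[ℂ] X × X :=
  (P.toFun ∘ₗ Submodule.inclusion (inf_le_left : colDom P S ≤ P.domain)).prod
    (S.toFun ∘ₗ Submodule.inclusion (inf_le_right : colDom P S ≤ S.domain))

lemma PSmap_apply (P S : X →ₗ.[ℂ] X) (x : colDom P S) :
    PSmap P S x = (Pap P S x, Sap P S x) := rfl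

lemma PSmap_injective {P S : X →ₗ.[ℂ] X} (hcoer : Coercive P S) :
    Function.Injective (PSmap P S) := by
  obtain ⟨c, hc, hcoe⟩ := hcoer
  rw [← LinearMap.ker_eq_bot, LinearMap.ker_eq_bot']
  intro z hz
  have h1 : Pap P S z = 0 ∧ Sap P S z = 0 := by
    have := PSmap_apply P S z
    rw [hz] at this
    exact ⟨congrArg Prod.fst this.symm, congrArg Prod.snd this.symm⟩
  have h2 := hcoe z
  rw [h1.1, h1.2] at h2
  simp only [norm_zero] at h2
  have hz0 : (z : X) = 0 := by
    by_contra h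
    have h3 : 0 < ‖(z : X)‖ := norm_pos_iff.mpr h
    nlinarith [pow_pos hc 2, pow_pos h3 2]
  exact Subtype.ext hz0

/-- Every linear relation `K` in `X` with
`{(Px,Sx) : x ∈ ker Γ₀ ∩ ker Γ₁} ⊆ K ⊆ ran[P;S]` equals `ran A_Θ` for a unique linear
relation `Θ ⊆ G × G`. -/
theorem intermediate_relation_param
    {G : Type*} [NormedAddCommGroup G] [InnerProductSpace ℂ G] [CompleteSpace G]
    (P₀ S₀ P S : X →ₗ.[ℂ] X)
    (hP₀ : Dense (P₀.domain : Set X)) (hS₀ : Dense (S₀.domain : Set X))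
    (hP : P = P₀.adjoint) (hS : S = S₀.adjoint)
    (hcoer : Coercive P S)
    (hsym : Hrel P₀ S₀ ⊆ relAdj (Hrel P₀ S₀))
    (Γ₀ Γ₁ : colDom P S →ₗ[ℂ] G)
    (hbt : IsBoundaryTriplet P S G Γ₀ Γ₁)
    (K : Submodule ℂ (X × X))
    (hlow : {p : X × X | ∃ x : colDom P S,
        Γ₀ x = 0 ∧ Γ₁ x = 0 ∧ p = (Pap P S x, Sap P S x)} ⊆ (K : Set (X × X)))
    (hup : (K : Set (X × X)) ⊆ ranPS P S) :
    ∃! Θ : Submodule ℂ (G × G),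
      (K : Set (X × X)) = ranA P S Γ₀ Γ₁ (Θ : Set (G × G)) := by
  set Θ : Submodule ℂ (G × G) :=
    Submodule.map (Γ₀.prod Γ₁) (Submodule.comap (PSmap P S) K) with hΘdef
  have hinj := PSmap_injective hcoer
  have hmem : ∀ x : colDom P S, (Γ₀ x, Γ₁ x) ∈ Θ ↔ (Pap P S x, Sap P S x) ∈ K := by
    intro x
    constructor
    · intro hgx
      rw [hΘdef, Submodule.mem_map] at hgx
      obtain ⟨y, hy, hxy⟩ := hgx
      have hyK : (Pap P S y, Sap P S y) ∈ K := by
        have := Submodule.mem_comap.mp hy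
        rwa [PSmap_apply] at this
      have h1 : Γ₀ y = Γ₀ x := congrArg Prod.fst hxy
      have h2 : Γ₁ y = Γ₁ x := congrArg Prod.snd hxy
      have hK1 : (Pap P S (x - y), Sap P S (x - y)) ∈ K := by
        apply hlow
        exact ⟨x - y, by simp [h1], by simp [h2], rfl⟩
      have hsum := K.add_mem hyK hK1
      have heq : (Pap P S y, Sap P S y) + (Pap P S (x - y), Sap P S (x - y))
          = (Pap P S x, Sap P S x) := by
        have := map_add (PSmap P S) y (x - y)
        rw [add_sub_cancel] at this
        simpa [PSmap_apply, Prod.ext_iff] using this.symm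
      rwa [heq] at hsum
    · intro hx
      rw [hΘdef, Submodule.mem_map]
      refine ⟨x, Submodule.mem_comap.mpr ?_, rfl⟩
      rwa [PSmap_apply]
  have hmem' : ∀ Θ' : Submodule ℂ (G × G),
      (K : Set (X × X)) = ranA P S Γ₀ Γ₁ (Θ' : Set (G × G)) →
      ∀ x : colDom P S, (Pap P S x, Sap P S x) ∈ K ↔ (Γ₀ x, Γ₁ x) ∈ Θ' := by
    intro Θ' hΘ' x
    constructor
    · intro hx
      have hx' : (Pap P S x, Sap P S x) ∈ ranA P S Γ₀ Γ₁ (Θ' : Set (G × G)) := by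
        rw [← hΘ']; exact hx
      obtain ⟨y, hy, hxy⟩ := hx'
      have hxyeq : x = y := hinj (by rw [PSmap_apply, PSmap_apply, ← hxy])
      rw [hxyeq]
      exact hy
    · intro hx
      have : (Pap P S x, Sap P S x) ∈ ranA P S Γ₀ Γ₁ (Θ' : Set (G × G)) := ⟨x, hx, rfl⟩
      rw [← hΘ'] at this
      exact this
  have hΘeq : (K : Set (X × X)) = ranA P S Γ₀ Γ₁ (Θ : Set (G × G)) := by
    ext p
    constructor
    · intro hp
      obtain ⟨x, hx⟩ := hup hp
      refine ⟨x, (hmem x).mpr ?_, hx⟩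
      rw [← hx]
      exact hp
    · rintro ⟨x, hx, rfl⟩
      exact (hmem x).mp hx
  refine ⟨Θ, hΘeq, ?_⟩
  intro Θ' hΘ'
  ext g
  constructor
  · intro hg
    obtain ⟨x, rfl⟩ := hbt.surj g
    exact (hmem x).mpr ((hmem' Θ' hΘ' x).mpr hg)
  · intro hg
    obtain ⟨x, rfl⟩ := hbt.surj g
    exact (hmem' Θ' hΘ' x).mp ((hmem x).mp hg)
end
end

section
/- Let X be a complex Hilbert space, P₀, S₀ densely defined linear operators in X with adjoints P = P₀*, S = S₀* satisfying the coercivity assumption, suppose the relation H is symmetric, and let (G, Γ₀, Γ₁) be a boundary triplet for ran[P;S]. Then for every linear relation Θ ⊆ G × G, the closure of ran A_Θ in X × X equals ran A_{cl(Θ)}, where cl(Θ) is the closure of Θ in G × G. -/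
open scoped ComplexInnerProductSpace

noncomputable section

variable {X : Type*} [NormedAddCommGroup X] [InnerProductSpace ℂ X] [CompleteSpace X]

/-! The graph `𝒢` of the column operator `[P;S]` is closed, since adjoints are closed, hence a
Banach space; by coercivity, `(x, Px, Sx) ↦ (Px, Sx)` is a closed embedding of `𝒢` into `X × X`.
On `𝒢` the boundary map `Γ = (Γ₀, Γ₁)` satisfies the Green identity, which passes to limits; as
`Γ` is onto, the Green form on `G × G` is nondegenerate, so `Γ` has closed graph and is bounded.
By the open mapping theorem `Γ` is open, so `Γ⁻¹ (closure Θ) = closure (Γ⁻¹ Θ)`, and the closed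
embedding carries this identity to `ran A_Θ`, the image of `Γ⁻¹ Θ`. -/

open Filter Topology
open scoped NNReal

section GreenForm

variable {Y : Type*} [NormedAddCommGroup Y] [InnerProductSpace ℂ Y]

def greenForm (p q : Y × Y) : ℂ := ⟪p.2, q.1⟫ - ⟪p.1, q.2⟫

theorem greenForm_sub_left (p p' q : Y × Y) :
    greenForm (p - p') q = greenForm p q - greenForm p' q := by
  simp only [greenForm, Prod.fst_sub, Prod.snd_sub, inner_sub_left]
  ring

theorem Filter.Tendsto.greenForm {α : Type*} {l : Filter α} {f g : α → Y × Y} {p q : Y × Y}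
    (hf : Tendsto f l (𝓝 p)) (hg : Tendsto g l (𝓝 q)) :
    Tendsto (fun a => _root_.greenForm (f a) (g a)) l (𝓝 (_root_.greenForm p q)) :=
  ((hf.snd_nhds).inner hg.fst_nhds).sub (hf.fst_nhds.inner hg.snd_nhds)

theorem eq_zero_of_forall_greenForm_eq_zero {p : Y × Y} (h : ∀ q, greenForm p q = 0) : p = 0 := by
  have h₂ := h (p.2, 0)
  have h₁ := h (0, p.1)
  simp only [greenForm, inner_zero_right, sub_zero, zero_sub, neg_eq_zero,
    inner_self_eq_zero] at h₁ h₂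
  exact Prod.ext h₁ h₂

theorem LinearMap.continuous_of_greenForm_eq {E G : Type*} [NormedAddCommGroup E]
    [NormedSpace ℂ E] [CompleteSpace E] [NormedAddCommGroup G] [InnerProductSpace ℂ G]
    [CompleteSpace G] {ι : E → Y × Y} (hι : Continuous ι) {β : E →ₗ[ℂ] G × G}
    (hβ : Function.Surjective β) (hgreen : ∀ u v, greenForm (ι u) (ι v) = greenForm (β u) (β v)) :
    Continuous β := by
  refine β.continuous_of_seq_closed_graph fun u x g hu hβu => ?_
  rw [← sub_eq_zero]
  refine eq_zero_of_forall_greenForm_eq_zero fun q => ?_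
  obtain ⟨v, rfl⟩ := hβ q
  rw [greenForm_sub_left, sub_eq_zero]
  have hlim := ((hι.tendsto x).comp hu).greenForm (tendsto_const_nhds (x := ι v))
  simp only [Function.comp_def, hgreen] at hlim
  exact tendsto_nhds_unique (hβu.greenForm tendsto_const_nhds) hlim

end GreenForm

namespace LinearPMap

variable {R E F : Type*} [Ring R] [AddCommGroup E] [Module R E] [AddCommGroup F] [Module R F]

def graphToDomain (f : E →ₗ.[R] F) : f.graph →ₗ[R] f.domain :=
  (LinearMap.fst R E F ∘ₗ f.graph.subtype).codRestrict f.domain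
    fun z => mem_domain_of_mem_graph z.2

theorem apply_graphToDomain (f : E →ₗ.[R] F) (z : f.graph) :
    f (f.graphToDomain z) = (z : E × F).2 := by
  obtain ⟨y, hy, hfy⟩ := (mem_graph_iff f).1 z.2
  rw [← hfy]
  congr
  exact Subtype.ext hy.symm

end LinearPMap

section ColumnOperator

variable {E : Type*} [NormedAddCommGroup E] [InnerProductSpace ℂ E]

def colOp (P S : E →ₗ.[ℂ] E) : E →ₗ.[ℂ] E × E where
  domain := colDom P S
  toFun := (P.toFun ∘ₗ Submodule.inclusion inf_le_left).prod
    (S.toFun ∘ₗ Submodule.inclusion inf_le_right)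

theorem colOp_isClosed {P S : E →ₗ.[ℂ] E} (hP : P.IsClosed) (hS : S.IsClosed) :
    (colOp P S).IsClosed := by
  have hgraph : ((colOp P S).graph : Set (E × (E × E))) =
      (fun z => (z.1, z.2.1)) ⁻¹' P.graph ∩ (fun z => (z.1, z.2.2)) ⁻¹' S.graph := by
    ext ⟨x, p, s⟩
    simp only [Set.mem_inter_iff, Set.mem_preimage, SetLike.mem_coe, LinearPMap.mem_graph_iff]
    constructor
    · rintro ⟨y, rfl, hy⟩
      exact ⟨⟨⟨y, y.2.1⟩, rfl, congrArg Prod.fst hy⟩, ⟨⟨y, y.2.2⟩, rfl, congrArg Prod.snd hy⟩⟩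
    · rintro ⟨⟨y, rfl, hy⟩, ⟨y', hyy', hy'⟩⟩
      have hy'S : (y : E) ∈ S.domain := hyy' ▸ y'.2
      refine ⟨⟨y, y.2, hy'S⟩, rfl, Prod.ext hy ?_⟩
      rw [← hy']
      exact congrArg S (Subtype.ext hyy'.symm)
  rw [LinearPMap.IsClosed, hgraph]
  exact (hP.preimage (by fun_prop)).inter (hS.preimage (by fun_prop))

theorem Coercive.exists_norm_le {P S : E →ₗ.[ℂ] E} (hcoer : Coercive P S) :
    ∃ C : ℝ≥0, ∀ x : colDom P S, ‖(x : E)‖ ≤ C * ‖colOp P S x‖ := by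
  obtain ⟨c, hc, hbound⟩ := hcoer
  refine ⟨⟨2 / c, by positivity⟩, fun x => ?_⟩
  have hP : ‖Pap P S x‖ ≤ ‖colOp P S x‖ := norm_fst_le (colOp P S x)
  have hS : ‖Sap P S x‖ ≤ ‖colOp P S x‖ := norm_snd_le (colOp P S x)
  have hsq : (c * ‖(x : E)‖) ^ 2 ≤ (2 * ‖colOp P S x‖) ^ 2 := by
    nlinarith [hbound x, norm_nonneg (Pap P S x), norm_nonneg (Sap P S x)]
  change ‖(x : E)‖ ≤ 2 / c * ‖colOp P S x‖
  rw [div_mul_eq_mul_div, le_div_iff₀ hc, mul_comm]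
  exact (pow_le_pow_iff_left₀ (by positivity) (by positivity) two_ne_zero).1 hsq

theorem isClosedEmbedding_graph_snd [CompleteSpace E] {P S : E →ₗ.[ℂ] E}
    (hclosed : (colOp P S).IsClosed) (hcoer : Coercive P S) :
    IsClosedEmbedding fun z : (colOp P S).graph => (z : E × (E × E)).2 := by
  have : CompleteSpace (colOp P S).graph := hclosed.isComplete.completeSpace_coe
  obtain ⟨C, hC⟩ := hcoer.exists_norm_le
  let f : (colOp P S).graph →L[ℂ] E × E :=
    ContinuousLinearMap.snd ℂ E (E × E) ∘L (colOp P S).graph.subtypeL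
  refine (f.antilipschitz_of_bound (K := C + 1) fun z => ?_).isClosedEmbedding f.uniformContinuous
  obtain ⟨y, hy, hfy⟩ := (LinearPMap.mem_graph_iff _).1 z.2
  have hz : ‖(z : E × (E × E)).1‖ ≤ C * ‖(z : E × (E × E)).2‖ := hy ▸ hfy ▸ hC y
  change ‖(z : E × (E × E))‖ ≤ (C + 1) * ‖(z : E × (E × E)).2‖
  have h₂ := norm_nonneg (z : E × (E × E)).2
  rw [norm_prod_le_iff]
  exact ⟨hz.trans (mul_le_mul_of_nonneg_right (by simp) h₂), le_mul_of_one_le_left h₂ (by simp)⟩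

end ColumnOperator

section BoundaryMap

variable {E G : Type*} [NormedAddCommGroup E] [InnerProductSpace ℂ E]
  [NormedAddCommGroup G] [InnerProductSpace ℂ G] {P S : E →ₗ.[ℂ] E}
  (Γ₀ Γ₁ : colDom P S →ₗ[ℂ] G)

def graphBoundaryMap : (colOp P S).graph →ₗ[ℂ] G × G :=
  (Γ₀.prod Γ₁) ∘ₗ (colOp P S).graphToDomain

theorem ranA_eq_image_graphBoundaryMap (Θ : Set (G × G)) :
    ranA P S Γ₀ Γ₁ Θ = (fun z : (colOp P S).graph => (z : E × (E × E)).2) ''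
      (graphBoundaryMap Γ₀ Γ₁ ⁻¹' Θ) := by
  ext p
  constructor
  · rintro ⟨x, hx, rfl⟩
    exact ⟨⟨_, (colOp P S).mem_graph x⟩, hx, rfl⟩
  · rintro ⟨z, hz, rfl⟩
    exact ⟨(colOp P S).graphToDomain z, hz, ((colOp P S).apply_graphToDomain z).symm⟩

variable {Γ₀ Γ₁}

theorem IsBoundaryTriplet.surjective_graphBoundaryMap (hbt : IsBoundaryTriplet P S G Γ₀ Γ₁) :
    Function.Surjective (graphBoundaryMap Γ₀ Γ₁) := by
  intro θ
  obtain ⟨x, rfl⟩ := hbt.surj θ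
  exact ⟨⟨_, (colOp P S).mem_graph x⟩, rfl⟩

theorem IsBoundaryTriplet.greenForm_graphBoundaryMap (hbt : IsBoundaryTriplet P S G Γ₀ Γ₁)
    (z w : (colOp P S).graph) :
    greenForm (z : E × (E × E)).2 (w : E × (E × E)).2 =
      greenForm (graphBoundaryMap Γ₀ Γ₁ z) (graphBoundaryMap Γ₀ Γ₁ w) := by
  rw [← (colOp P S).apply_graphToDomain z, ← (colOp P S).apply_graphToDomain w]
  exact hbt.green _ _

theorem IsBoundaryTriplet.continuous_graphBoundaryMap [CompleteSpace E] [CompleteSpace G]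
    (hbt : IsBoundaryTriplet P S G Γ₀ Γ₁) (hclosed : (colOp P S).IsClosed) :
    Continuous (graphBoundaryMap Γ₀ Γ₁) :=
  have : CompleteSpace (colOp P S).graph := hclosed.isComplete.completeSpace_coe
  LinearMap.continuous_of_greenForm_eq (by fun_prop) hbt.surjective_graphBoundaryMap
    hbt.greenForm_graphBoundaryMap

end BoundaryMap

theorem closure_ranA_general
    {G : Type*} [NormedAddCommGroup G] [InnerProductSpace ℂ G] [CompleteSpace G]
    (P₀ S₀ P S : X →ₗ.[ℂ] X)
    (hP₀ : Dense (P₀.domain : Set X)) (hS₀ : Dense (S₀.domain : Set X))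
    (hP : P = P₀.adjoint) (hS : S = S₀.adjoint)
    (hcoer : Coercive P S)
    (Γ₀ Γ₁ : colDom P S →ₗ[ℂ] G)
    (hbt : IsBoundaryTriplet P S G Γ₀ Γ₁)
    (Θ : Submodule ℂ (G × G)) :
    closure (ranA P S Γ₀ Γ₁ (Θ : Set (G × G)))
      = ranA P S Γ₀ Γ₁ (closure (Θ : Set (G × G))) := by
  have hclosed : (colOp P S).IsClosed := by
    rw [hP, hS]
    exact colOp_isClosed (LinearPMap.adjoint_isClosed hP₀) (LinearPMap.adjoint_isClosed hS₀)
  have : CompleteSpace (colOp P S).graph := hclosed.isComplete.completeSpace_coe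
  have hcont := hbt.continuous_graphBoundaryMap hclosed
  have hopen : IsOpenMap (graphBoundaryMap Γ₀ Γ₁) :=
    ContinuousLinearMap.isOpenMap ⟨_, hcont⟩ hbt.surjective_graphBoundaryMap
  rw [ranA_eq_image_graphBoundaryMap, ranA_eq_image_graphBoundaryMap,
    (isClosedEmbedding_graph_snd hclosed hcoer).closure_image_eq,
    hopen.preimage_closure_eq_closure_preimage hcont]

/-- `closure (ran A_Θ) = ran A_{closure Θ}` for every linear relation `Θ`. -/
theorem closure_ranA
    {G : Type*} [NormedAddCommGroup G] [InnerProductSpace ℂ G] [CompleteSpace G]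
    (P₀ S₀ P S : X →ₗ.[ℂ] X)
    (hP₀ : Dense (P₀.domain : Set X)) (hS₀ : Dense (S₀.domain : Set X))
    (hP : P = P₀.adjoint) (hS : S = S₀.adjoint)
    (hcoer : Coercive P S)
    (hsym : Hrel P₀ S₀ ⊆ relAdj (Hrel P₀ S₀))
    (Γ₀ Γ₁ : colDom P S →ₗ[ℂ] G)
    (hbt : IsBoundaryTriplet P S G Γ₀ Γ₁)
    (Θ : Submodule ℂ (G × G)) :
    closure (ranA P S Γ₀ Γ₁ (Θ : Set (G × G)))
      = ranA P S Γ₀ Γ₁ (closure (Θ : Set (G × G))) :=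
  closure_ranA_general P₀ S₀ P S hP₀ hS₀ hP hS hcoer Γ₀ Γ₁ hbt Θ
end
end

section
/- Let X be a complex Hilbert space and P₀, S₀ densely defined linear operators in X with adjoints P = P₀*, S = S₀* satisfying the coercivity assumption, and suppose the relation H is symmetric. Let D be a dense subspace of dom[P;S] with respect to the norm ‖x‖ = (‖Px‖² + ‖Sx‖²)^{1/2}, and suppose there exist a Hilbert space G and linear bounded maps Γ₀, Γ₁ : D → G such that (Γ₀, Γ₁) : D → G × G is surjective and ⟨Sx, Py⟩ − ⟨Px, Sy⟩ = ⟨Γ₁x, Γ₀y⟩_G − ⟨Γ₀x, Γ₁y⟩_G for all x, y ∈ D. Then the unique continuous extensions Γ̃₀, Γ̃₁ : dom[P;S] → G of Γ₀, Γ₁ yield a boundary triplet (G, Γ̃₀, Γ̃₁) for ran[P;S]. -/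
open scoped ComplexInnerProductSpace
open Filter Topology

noncomputable section

variable {X : Type*} [NormedAddCommGroup X] [InnerProductSpace ℂ X] [CompleteSpace X]

open Filter Topology in
/-- Auxiliary: extension by density of a linear map bounded w.r.t. a seminorm `‖T ·‖`. -/
lemma ext_by_density {V E F : Type*} [AddCommGroup V] [Module ℂ V]
    [NormedAddCommGroup E] [NormedSpace ℂ E]
    [NormedAddCommGroup F] [NormedSpace ℂ F] [CompleteSpace F]
    (T : V →ₗ[ℂ] E) (D : Submodule ℂ V) (Γ : D →ₗ[ℂ] F) (K : ℝ) (hK0 : 0 ≤ K)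
    (hK : ∀ d : D, ‖Γ d‖ ≤ K * ‖T d‖)
    (hdense : ∀ x : V, ∀ ε : ℝ, 0 < ε → ∃ d ∈ D, ‖T (x - d)‖ < ε) :
    ∃ Γt : V →ₗ[ℂ] F, (∀ x, ‖Γt x‖ ≤ K * ‖T x‖) ∧ (∀ d : D, Γt d = Γ d) ∧
      (∀ (x : V) (e : ℕ → D), Tendsto (fun n => ‖T (x - e n)‖) atTop (𝓝 0) →
        Tendsto (fun n => Γ (e n)) atTop (𝓝 (Γt x))) := by
  -- approximating sequences exist
  have happrox : ∀ x : V, ∃ e : ℕ → D, Tendsto (fun n => ‖T (x - e n)‖) atTop (𝓝 0) := by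
    intro x
    have h : ∀ n : ℕ, ∃ d : D, ‖T (x - d)‖ < 1 / ((n : ℝ) + 1) := by
      intro n
      obtain ⟨d, hd, hlt⟩ := hdense x (1 / ((n : ℝ) + 1)) (by positivity)
      exact ⟨⟨d, hd⟩, hlt⟩
    choose e he using h
    refine ⟨e, squeeze_zero (fun n => norm_nonneg _) (fun n => (he n).le)
      tendsto_one_div_add_atTop_nhds_zero_nat⟩
  -- key limit existence
  have key : ∀ x : V, ∃ g : F, ∀ e : ℕ → D,
      Tendsto (fun n => ‖T (x - e n)‖) atTop (𝓝 0) →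
      Tendsto (fun n => Γ (e n)) atTop (𝓝 g) := by
    intro x
    obtain ⟨e₀, he₀⟩ := happrox x
    have hbound : ∀ (e f : ℕ → D) (n : ℕ),
        ‖Γ (e n) - Γ (f n)‖ ≤ K * (‖T (x - e n)‖ + ‖T (x - f n)‖) := by
      intro e f n
      have h1 : ‖Γ (e n) - Γ (f n)‖ = ‖Γ (e n - f n)‖ := by rw [map_sub]
      have h2 : ‖T ((e n : V) - (f n : V))‖ ≤ ‖T (x - e n)‖ + ‖T (x - f n)‖ := by
        have : T ((e n : V) - (f n : V)) = T (x - f n) - T (x - e n) := by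
          rw [← map_sub]; exact congrArg T (by abel)
        rw [this]
        exact (norm_sub_le _ _).trans (by rw [add_comm])
      calc ‖Γ (e n) - Γ (f n)‖ = ‖Γ (e n - f n)‖ := h1
        _ ≤ K * ‖T ((e n - f n : D) : V)‖ := hK _
        _ = K * ‖T ((e n : V) - (f n : V))‖ := by norm_cast
        _ ≤ K * (‖T (x - e n)‖ + ‖T (x - f n)‖) := by
            exact mul_le_mul_of_nonneg_left h2 hK0
    -- Cauchy
    have hcauchy : CauchySeq (fun n => Γ (e₀ n)) := by
      rw [Metric.cauchySeq_iff]
      intro ε hε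
      have h2 : Tendsto (fun n => K * (2 * ‖T (x - e₀ n)‖)) atTop (𝓝 0) := by
        have := (he₀.const_mul 2).const_mul K
        simpa using this
      obtain ⟨N, hN⟩ := (Metric.tendsto_atTop.mp h2 ε hε)
      refine ⟨N, fun m hm n hn => ?_⟩
      have h4 : ‖Γ (e₀ m) - Γ (e₀ n)‖ ≤ K * (‖T (x - e₀ m)‖ + ‖T (x - e₀ n)‖) := by
        have h1 : ‖Γ (e₀ m) - Γ (e₀ n)‖ = ‖Γ (e₀ m - e₀ n)‖ := by rw [map_sub]
        have h2' : ‖T ((e₀ m : V) - (e₀ n : V))‖ ≤ ‖T (x - e₀ m)‖ + ‖T (x - e₀ n)‖ := by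
          have : T ((e₀ m : V) - (e₀ n : V)) = T (x - e₀ n) - T (x - e₀ m) := by
            rw [← map_sub]; exact congrArg T (by abel)
          rw [this]
          exact (norm_sub_le _ _).trans (by rw [add_comm])
        calc ‖Γ (e₀ m) - Γ (e₀ n)‖ = ‖Γ (e₀ m - e₀ n)‖ := h1
          _ ≤ K * ‖T ((e₀ m - e₀ n : D) : V)‖ := hK _
          _ = K * ‖T ((e₀ m : V) - (e₀ n : V))‖ := by norm_cast
          _ ≤ _ := mul_le_mul_of_nonneg_left h2' hK0
      have hNm := hN m hm
      have hNn := hN n hn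
      rw [Real.dist_eq, sub_zero] at hNm hNn
      rw [dist_eq_norm]
      have hm' : K * (2 * ‖T (x - e₀ m)‖) < ε := lt_of_abs_lt hNm
      have hn' : K * (2 * ‖T (x - e₀ n)‖) < ε := lt_of_abs_lt hNn
      nlinarith [norm_nonneg (T (x - e₀ m)), norm_nonneg (T (x - e₀ n)), hK0]
    obtain ⟨g, hg⟩ := cauchySeq_tendsto_of_complete hcauchy
    refine ⟨g, fun e he => ?_⟩
    have hdiff : Tendsto (fun n => Γ (e n) - Γ (e₀ n)) atTop (𝓝 0) := by
      have hb : Tendsto (fun n => K * (‖T (x - e n)‖ + ‖T (x - e₀ n)‖)) atTop (𝓝 0) := by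
        have := (he.add he₀).const_mul K
        simpa using this
      exact squeeze_zero_norm (fun n => hbound e e₀ n) hb
    have := hdiff.add hg
    simpa using this
  choose Γt' hΓt' using key
  have hagree : ∀ d : D, Γt' d = Γ d := by
    intro d
    have h := hΓt' (d : V) (fun _ => d) (by simpa using tendsto_const_nhds)
    exact (tendsto_nhds_unique tendsto_const_nhds h).symm
  have hadd : ∀ x y : V, Γt' (x + y) = Γt' x + Γt' y := by
    intro x y
    obtain ⟨e, he⟩ := happrox x
    obtain ⟨f, hf⟩ := happrox y
    have hef : Tendsto (fun n => ‖T (x + y - (e n + f n : D))‖) atTop (𝓝 0) := by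
      have hb : Tendsto (fun n => ‖T (x - e n)‖ + ‖T (y - f n)‖) atTop (𝓝 0) := by
        simpa using he.add hf
      refine squeeze_zero (fun n => norm_nonneg _) (fun n => ?_) hb
      have : T (x + y - ((e n + f n : D) : V)) = T (x - e n) + T (y - f n) := by
        rw [← map_add]; exact congrArg T (by push_cast; abel)
      rw [this]
      exact norm_add_le _ _
    have h1 := hΓt' (x + y) (fun n => e n + f n) hef
    have h2 := (hΓt' x e he).add (hΓt' y f hf)
    have h2' : Tendsto (fun n => Γ (e n + f n)) atTop (𝓝 (Γt' x + Γt' y)) := by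
      simpa [map_add] using h2
    exact tendsto_nhds_unique h1 h2'
  have hsmul : ∀ (c : ℂ) (x : V), Γt' (c • x) = c • Γt' x := by
    intro c x
    obtain ⟨e, he⟩ := happrox x
    have hce : Tendsto (fun n => ‖T (c • x - (c • e n : D))‖) atTop (𝓝 0) := by
      have hb : Tendsto (fun n => ‖c‖ * ‖T (x - e n)‖) atTop (𝓝 0) := by
        simpa using he.const_mul ‖c‖
      refine squeeze_zero (fun n => norm_nonneg _) (fun n => ?_) hb
      have : T (c • x - ((c • e n : D) : V)) = c • T (x - e n) := by
        rw [← map_smul]; exact congrArg T (by push_cast; rw [smul_sub])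
      rw [this, norm_smul]
    have h1 := hΓt' (c • x) (fun n => c • e n) hce
    have h2 : Tendsto (fun n => Γ (c • e n)) atTop (𝓝 (c • Γt' x)) := by
      simpa [map_smul] using (hΓt' x e he).const_smul c
    exact tendsto_nhds_unique h1 h2
  have hbnd : ∀ x : V, ‖Γt' x‖ ≤ K * ‖T x‖ := by
    intro x
    obtain ⟨e, he⟩ := happrox x
    have h1 : Tendsto (fun n => ‖Γ (e n)‖) atTop (𝓝 ‖Γt' x‖) :=
      (hΓt' x e he).norm
    have hTe : Tendsto (fun n => T ((e n : V))) atTop (𝓝 (T x)) := by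
      have heq : (fun n => T ((e n : V))) = fun n => T x - T (x - e n) := by
        funext n; rw [map_sub]; abel
      rw [heq]
      have h0 : Tendsto (fun n => T (x - e n)) atTop (𝓝 0) :=
        tendsto_zero_iff_norm_tendsto_zero.mpr he
      have h0' : Tendsto (fun n => T x - T (x - e n)) atTop (𝓝 (T x - 0)) :=
        Tendsto.sub tendsto_const_nhds h0
      simpa using h0'
    have h2 : Tendsto (fun n => K * ‖T ((e n : V))‖) atTop (𝓝 (K * ‖T x‖)) :=
      (hTe.norm).const_mul K
    exact le_of_tendsto_of_tendsto' h1 h2 (fun n => hK (e n))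
  exact ⟨{ toFun := Γt', map_add' := hadd, map_smul' := hsmul }, hbnd, hagree, hΓt'⟩

/-- `Pap` as a linear map. -/
def PapL (P S : X →ₗ.[ℂ] X) : colDom P S →ₗ[ℂ] X where
  toFun := Pap P S
  map_add' x y := P.map_add ⟨x.1, x.2.1⟩ ⟨y.1, y.2.1⟩
  map_smul' c x := P.map_smul c ⟨x.1, x.2.1⟩

/-- `Sap` as a linear map. -/
def SapL (P S : X →ₗ.[ℂ] X) : colDom P S →ₗ[ℂ] X where
  toFun := Sap P S
  map_add' x y := S.map_add ⟨x.1, x.2.2⟩ ⟨y.1, y.2.2⟩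
  map_smul' c x := S.map_smul c ⟨x.1, x.2.2⟩

/-- The column operator `[P;S]` into the `L²` product. -/
def TL (P S : X →ₗ.[ℂ] X) : colDom P S →ₗ[ℂ] WithLp 2 (X × X) :=
  (WithLp.linearEquiv 2 ℂ (X × X)).symm.toLinearMap ∘ₗ ((PapL P S).prod (SapL P S))

omit [CompleteSpace X] in
lemma TL_norm_sq (P S : X →ₗ.[ℂ] X) (x : colDom P S) :
    ‖TL P S x‖ ^ 2 = gnormSq P S x := by
  rw [WithLp.prod_norm_sq_eq_of_L2]; rfl

lemma sq_le_bound {a c t : ℝ} (ha : 0 ≤ a) (ht : 0 ≤ t) (hc : 0 ≤ c) (h : a ^ 2 ≤ c * t ^ 2) :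
    a ≤ Real.sqrt c * t := by
  have h2 := Real.sqrt_le_sqrt h
  rwa [Real.sqrt_sq ha, Real.sqrt_mul hc, Real.sqrt_sq ht] at h2


/-- If the abstract Green identity holds on a dense subspace `D` of `dom[P;S]`
(w.r.t. the graph norm) for bounded, jointly surjective linear maps `Γ₀, Γ₁ : D → G`, then the
unique continuous extensions form a boundary triplet for `ran[P;S]`. -/
theorem boundaryTriplet_extension_by_density
    {G : Type*} [NormedAddCommGroup G] [InnerProductSpace ℂ G] [CompleteSpace G]
    (P₀ S₀ P S : X →ₗ.[ℂ] X)
    (hP₀ : Dense (P₀.domain : Set X)) (hS₀ : Dense (S₀.domain : Set X))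
    (hP : P = P₀.adjoint) (hS : S = S₀.adjoint)
    (hcoer : Coercive P S)
    (hsym : Hrel P₀ S₀ ⊆ relAdj (Hrel P₀ S₀))
    (D : Submodule ℂ (colDom P S))
    (hdense : ∀ x : colDom P S, ∀ ε : ℝ, 0 < ε → ∃ d ∈ D, gnormSq P S (x - d) < ε)
    (Γ₀ Γ₁ : D →ₗ[ℂ] G)
    (hbdd : ∃ C : ℝ, 0 ≤ C ∧ ∀ d : D, ‖Γ₀ d‖ ^ 2 + ‖Γ₁ d‖ ^ 2 ≤ C * gnormSq P S (d : colDom P S))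
    (hsurj : Function.Surjective fun d : D => (Γ₀ d, Γ₁ d))
    (hgreen : ∀ d e : D,
      ⟪Sap P S (d : colDom P S), Pap P S (e : colDom P S)⟫
          - ⟪Pap P S (d : colDom P S), Sap P S (e : colDom P S)⟫
        = ⟪Γ₁ d, Γ₀ e⟫ - ⟪Γ₀ d, Γ₁ e⟫) :
    ∃ Γt₀ Γt₁ : colDom P S →ₗ[ℂ] G,
      (∃ C : ℝ, 0 ≤ C ∧ ∀ x : colDom P S, ‖Γt₀ x‖ ^ 2 + ‖Γt₁ x‖ ^ 2 ≤ C * gnormSq P S x) ∧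
      (∀ d : D, Γt₀ (d : colDom P S) = Γ₀ d ∧ Γt₁ (d : colDom P S) = Γ₁ d) ∧
      IsBoundaryTriplet P S G Γt₀ Γt₁ ∧
      (∀ Γ₀' Γ₁' : colDom P S →ₗ[ℂ] G,
        (∃ C : ℝ, 0 ≤ C ∧ ∀ x : colDom P S, ‖Γ₀' x‖ ^ 2 + ‖Γ₁' x‖ ^ 2 ≤ C * gnormSq P S x) →
        (∀ d : D, Γ₀' (d : colDom P S) = Γ₀ d ∧ Γ₁' (d : colDom P S) = Γ₁ d) →
        Γ₀' = Γt₀ ∧ Γ₁' = Γt₁) := by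
  obtain ⟨C, hC0, hCb⟩ := hbdd
  -- the combined boundary map into `L²(G × G)`
  set ΓL : D →ₗ[ℂ] WithLp 2 (G × G) :=
    (WithLp.linearEquiv 2 ℂ (G × G)).symm.toLinearMap ∘ₗ (Γ₀.prod Γ₁) with hΓL
  have hΓLsq : ∀ d : D, ‖ΓL d‖ ^ 2 = ‖Γ₀ d‖ ^ 2 + ‖Γ₁ d‖ ^ 2 := by
    intro d; rw [WithLp.prod_norm_sq_eq_of_L2]; rfl
  have hK : ∀ d : D, ‖ΓL d‖ ≤ Real.sqrt C * ‖TL P S d‖ := by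
    intro d
    refine sq_le_bound (norm_nonneg _) (norm_nonneg _) hC0 ?_
    rw [hΓLsq, TL_norm_sq]
    exact hCb d
  have hdense' : ∀ x : colDom P S, ∀ ε : ℝ, 0 < ε → ∃ d ∈ D, ‖TL P S (x - d)‖ < ε := by
    intro x ε hε
    obtain ⟨d, hd, hlt⟩ := hdense x (ε ^ 2) (by positivity)
    refine ⟨d, hd, ?_⟩
    have h2 : ‖TL P S (x - d)‖ ^ 2 < ε ^ 2 := by rw [TL_norm_sq]; exact hlt
    exact lt_of_pow_lt_pow_left₀ 2 hε.le h2
  obtain ⟨Γt, hbnd, hagree, hspec⟩ :=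
    ext_by_density (TL P S) D ΓL (Real.sqrt C) (Real.sqrt_nonneg C) hK hdense'
  -- component maps
  set Γt₀ : colDom P S →ₗ[ℂ] G :=
    LinearMap.fst ℂ G G ∘ₗ (WithLp.linearEquiv 2 ℂ (G × G)).toLinearMap ∘ₗ Γt with hΓt₀
  set Γt₁ : colDom P S →ₗ[ℂ] G :=
    LinearMap.snd ℂ G G ∘ₗ (WithLp.linearEquiv 2 ℂ (G × G)).toLinearMap ∘ₗ Γt with hΓt₁
  have hsq : ∀ x : colDom P S, ‖Γt₀ x‖ ^ 2 + ‖Γt₁ x‖ ^ 2 = ‖Γt x‖ ^ 2 := by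
    intro x; rw [WithLp.prod_norm_sq_eq_of_L2]; rfl
  have hcomp0 : ∀ d : D, Γt₀ (d : colDom P S) = Γ₀ d := by
    intro d
    have h := hagree d
    show ((WithLp.linearEquiv 2 ℂ (G × G)) (Γt (d : colDom P S))).1 = Γ₀ d
    rw [h]; rfl
  have hcomp1 : ∀ d : D, Γt₁ (d : colDom P S) = Γ₁ d := by
    intro d
    have h := hagree d
    show ((WithLp.linearEquiv 2 ℂ (G × G)) (Γt (d : colDom P S))).2 = Γ₁ d
    rw [h]; rfl
  -- approximating sequences
  have happrox : ∀ x : colDom P S, ∃ e : ℕ → D,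
      Tendsto (fun n => ‖TL P S (x - e n)‖) atTop (𝓝 0) := by
    intro x
    have h : ∀ n : ℕ, ∃ d : D, ‖TL P S (x - d)‖ < 1 / ((n : ℝ) + 1) := by
      intro n
      obtain ⟨d, hd, hlt⟩ := hdense' x (1 / ((n : ℝ) + 1)) (by positivity)
      exact ⟨⟨d, hd⟩, hlt⟩
    choose e he using h
    exact ⟨e, squeeze_zero (fun n => norm_nonneg _) (fun n => (he n).le)
      tendsto_one_div_add_atTop_nhds_zero_nat⟩
  -- convergence of all the components along approximating sequences
  have hTto : ∀ (x : colDom P S) (e : ℕ → D),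
      Tendsto (fun n => ‖TL P S (x - e n)‖) atTop (𝓝 0) →
      Tendsto (fun n => TL P S ((e n : colDom P S))) atTop (𝓝 (TL P S x)) := by
    intro x e he
    have heq : (fun n => TL P S ((e n : colDom P S)))
        = fun n => TL P S x - TL P S (x - e n) := by
      funext n; rw [map_sub]; abel
    rw [heq]
    have h0 : Tendsto (fun n => TL P S (x - e n)) atTop (𝓝 0) :=
      tendsto_zero_iff_norm_tendsto_zero.mpr he
    have h0' : Tendsto (fun n => TL P S x - TL P S (x - e n)) atTop (𝓝 (TL P S x - 0)) :=
      Tendsto.sub tendsto_const_nhds h0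
    rwa [sub_zero] at h0'
  have hPto : ∀ (x : colDom P S) (e : ℕ → D),
      Tendsto (fun n => ‖TL P S (x - e n)‖) atTop (𝓝 0) →
      Tendsto (fun n => Pap P S ((e n : colDom P S))) atTop (𝓝 (Pap P S x)) := by
    intro x e he
    exact (continuous_fst.tendsto _).comp
      (((WithLp.prodContinuousLinearEquiv 2 ℂ X X).continuous.tendsto _).comp (hTto x e he))
  have hSto : ∀ (x : colDom P S) (e : ℕ → D),
      Tendsto (fun n => ‖TL P S (x - e n)‖) atTop (𝓝 0) →
      Tendsto (fun n => Sap P S ((e n : colDom P S))) atTop (𝓝 (Sap P S x)) := by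
    intro x e he
    exact (continuous_snd.tendsto _).comp
      (((WithLp.prodContinuousLinearEquiv 2 ℂ X X).continuous.tendsto _).comp (hTto x e he))
  have hΓ0to : ∀ (x : colDom P S) (e : ℕ → D),
      Tendsto (fun n => ‖TL P S (x - e n)‖) atTop (𝓝 0) →
      Tendsto (fun n => Γ₀ (e n)) atTop (𝓝 (Γt₀ x)) := by
    intro x e he
    exact (continuous_fst.tendsto _).comp
      (((WithLp.prodContinuousLinearEquiv 2 ℂ G G).continuous.tendsto _).comp (hspec x e he))
  have hΓ1to : ∀ (x : colDom P S) (e : ℕ → D),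
      Tendsto (fun n => ‖TL P S (x - e n)‖) atTop (𝓝 0) →
      Tendsto (fun n => Γ₁ (e n)) atTop (𝓝 (Γt₁ x)) := by
    intro x e he
    exact (continuous_snd.tendsto _).comp
      (((WithLp.prodContinuousLinearEquiv 2 ℂ G G).continuous.tendsto _).comp (hspec x e he))
  refine ⟨Γt₀, Γt₁, ⟨C, hC0, ?_⟩, fun d => ⟨hcomp0 d, hcomp1 d⟩, ⟨?_, ?_⟩, ?_⟩
  · -- boundedness
    intro x
    calc ‖Γt₀ x‖ ^ 2 + ‖Γt₁ x‖ ^ 2 = ‖Γt x‖ ^ 2 := hsq x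
      _ ≤ (Real.sqrt C * ‖TL P S x‖) ^ 2 := by
          have := hbnd x
          exact pow_le_pow_left₀ (norm_nonneg _) this 2
      _ = C * ‖TL P S x‖ ^ 2 := by rw [mul_pow, Real.sq_sqrt hC0]
      _ = C * gnormSq P S x := by rw [TL_norm_sq]
  · -- surjectivity
    intro g
    obtain ⟨d, hd⟩ := hsurj g
    refine ⟨(d : colDom P S), ?_⟩
    simp only [hcomp0 d, hcomp1 d]
    exact hd
  · -- Green identity
    intro x y
    obtain ⟨e, he⟩ := happrox x
    obtain ⟨f, hf⟩ := happrox y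
    have hL : Tendsto (fun n =>
        ⟪Sap P S ((e n : colDom P S)), Pap P S ((f n : colDom P S))⟫
          - ⟪Pap P S ((e n : colDom P S)), Sap P S ((f n : colDom P S))⟫) atTop
        (𝓝 (⟪Sap P S x, Pap P S y⟫ - ⟪Pap P S x, Sap P S y⟫)) :=
      ((hSto x e he).inner (hPto y f hf)).sub ((hPto x e he).inner (hSto y f hf))
    have hR : Tendsto (fun n => ⟪Γ₁ (e n), Γ₀ (f n)⟫ - ⟪Γ₀ (e n), Γ₁ (f n)⟫) atTop
        (𝓝 (⟪Γt₁ x, Γt₀ y⟫ - ⟪Γt₀ x, Γt₁ y⟫)) :=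
      ((hΓ1to x e he).inner (hΓ0to y f hf)).sub ((hΓ0to x e he).inner (hΓ1to y f hf))
    have heqf : (fun n =>
        ⟪Sap P S ((e n : colDom P S)), Pap P S ((f n : colDom P S))⟫
          - ⟪Pap P S ((e n : colDom P S)), Sap P S ((f n : colDom P S))⟫)
        = fun n => ⟪Γ₁ (e n), Γ₀ (f n)⟫ - ⟪Γ₀ (e n), Γ₁ (f n)⟫ :=
      funext fun n => hgreen (e n) (f n)
    rw [heqf] at hL
    exact tendsto_nhds_unique hL hR
  · -- uniqueness
    intro Γ₀' Γ₁' hbdd' hag'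
    obtain ⟨C', hC'0, hC'b⟩ := hbdd'
    have hbnd0' : ∀ z : colDom P S, ‖Γ₀' z‖ ≤ Real.sqrt C' * ‖TL P S z‖ := by
      intro z
      refine sq_le_bound (norm_nonneg _) (norm_nonneg _) hC'0 ?_
      rw [TL_norm_sq]
      exact le_trans (le_add_of_nonneg_right (by positivity)) (hC'b z)
    have hbnd1' : ∀ z : colDom P S, ‖Γ₁' z‖ ≤ Real.sqrt C' * ‖TL P S z‖ := by
      intro z
      refine sq_le_bound (norm_nonneg _) (norm_nonneg _) hC'0 ?_
      rw [TL_norm_sq]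
      exact le_trans (le_add_of_nonneg_left (by positivity)) (hC'b z)
    have key : ∀ (Γ' : colDom P S →ₗ[ℂ] G),
        (∀ z : colDom P S, ‖Γ' z‖ ≤ Real.sqrt C' * ‖TL P S z‖) →
        ∀ (x : colDom P S) (e : ℕ → D),
          Tendsto (fun n => ‖TL P S (x - e n)‖) atTop (𝓝 0) →
          Tendsto (fun n => Γ' (e n : colDom P S)) atTop (𝓝 (Γ' x)) := by
      intro Γ' hΓ' x e he
      rw [tendsto_iff_norm_sub_tendsto_zero]
      have hb : Tendsto (fun n => Real.sqrt C' * ‖TL P S (x - e n)‖) atTop (𝓝 0) := by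
        have := he.const_mul (Real.sqrt C')
        simpa using this
      refine squeeze_zero (fun n => norm_nonneg _) (fun n => ?_) hb
      have h1 : Γ' (e n : colDom P S) - Γ' x = Γ' ((e n : colDom P S) - x) := by
        rw [map_sub]
      rw [h1]
      have h2 := hΓ' ((e n : colDom P S) - x)
      have h3 : ‖TL P S ((e n : colDom P S) - x)‖ = ‖TL P S (x - e n)‖ := by
        rw [← norm_neg, ← map_neg]
        exact congrArg (fun z => ‖TL P S z‖) (by abel)
      rwa [h3] at h2
    constructor
    · apply LinearMap.ext
      intro x
      obtain ⟨e, he⟩ := happrox x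
      have h1 := hΓ0to x e he
      have h2 := key Γ₀' hbnd0' x e he
      have h2' : Tendsto (fun n => Γ₀ (e n)) atTop (𝓝 (Γ₀' x)) := by
        have heq : (fun n => Γ₀' (e n : colDom P S)) = fun n => Γ₀ (e n) :=
          funext fun n => (hag' (e n)).1
        rwa [heq] at h2
      exact tendsto_nhds_unique h2' h1
    · apply LinearMap.ext
      intro x
      obtain ⟨e, he⟩ := happrox x
      have h1 := hΓ1to x e he
      have h2 := key Γ₁' hbnd1' x e he
      have h2' : Tendsto (fun n => Γ₁ (e n)) atTop (𝓝 (Γ₁' x)) := by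
        have heq : (fun n => Γ₁' (e n : colDom P S)) = fun n => Γ₁ (e n) :=
          funext fun n => (hag' (e n)).2
        rwa [heq] at h2
      exact tendsto_nhds_unique h2' h1
end
end
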